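/- arXiv:2211.14216 — 2 statements merged into one kernel-verified Lean document; each statement's English description precedes it below -/
import Mathlib

section
/- Let u be a recurrent infinite word and F a cellular automaton of radius r whose local rule f satisfies: f(x₁y₁) = f(x₂y₂) if and only if x₁ = x₂ (for letters x₁,x₂ and words y₁,y₂ of length r−1). Then F(u) is balanced if and only if u is balanced. -/
/-- The window of length `n` of an infinite word `u` starting at position `i`. -/
def window {A : Type*} (u : ℕ → A) (i n : ℕ) : List A :=
  (List.range n).map (fun j => u (i + j))

/-- `w` is a (finite) factor of the infinite word `u`. -/
def IsFactor {A : Type*} (u : ℕ → A) (w : List A) : Prop :=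
  ∃ i, w = window u i w.length

/-- The cellular automaton with local rule `f` of radius `r`, on finite words. -/
def caF {A B : Type*} (f : List A → B) (r : ℕ) (w : List A) : List B :=
  (List.range (w.length + 1 - r)).map (fun i => f ((w.drop i).take r))

/-- The cellular automaton with local rule `f` of radius `r`, on infinite words. -/
def caFInf {A B : Type*} (f : List A → B) (r : ℕ) (u : ℕ → A) : ℕ → B :=
  fun i => f (window u i r)

/-- The set of factors of length `n` of `u`. -/
def factorsOfLen {A : Type*} (u : ℕ → A) (n : ℕ) : Set (List A) :=
  {w | w.length = n ∧ IsFactor u w}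

/-- The factor complexity function. -/
noncomputable def complexity {A : Type*} (u : ℕ → A) (n : ℕ) : ℕ :=
  Nat.card (factorsOfLen u n)

/-- `u` is recurrent: every factor occurs at arbitrarily large positions. -/
def Recurrent {A : Type*} (u : ℕ → A) : Prop :=
  ∀ w : List A, IsFactor u w → ∀ N : ℕ, ∃ p, N ≤ p ∧ w = window u p w.length

/-- `u` is balanced: any two equal-length factors differ by at most 1 in the
number of occurrences of each letter. -/
def BalancedWord {A : Type*} [DecidableEq A] (u : ℕ → A) : Prop :=
  ∀ x : A, ∀ v w : List A, IsFactor u v → IsFactor u w → v.length = w.length →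
    |(v.count x : ℤ) - (w.count x : ℤ)| ≤ 1

/-
Under the hypothesis on `f`, the value `f (x :: y)` depends only on the first letter `x`, and
injectively so. Hence `F(u) = φ ∘ u` for an injective letter-to-letter map `φ`, and such a
renaming of letters maps the factors of `u` bijectively onto those of `φ ∘ u` while preserving
all letter counts; letters outside the image of `φ` never occur in `φ ∘ u`.
-/

section Window

variable {A B : Type*}

@[simp]
lemma window_length (u : ℕ → A) (i n : ℕ) : (window u i n).length = n := by
  simp [window]

lemma window_succ (u : ℕ → A) (i n : ℕ) : window u i (n + 1) = u i :: window u (i + 1) n := by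
  simp only [window, List.range_succ_eq_map, List.map_cons, List.map_map, Nat.add_zero]
  congr 1
  exact List.map_congr_left fun j _ => congrArg u (by omega)

lemma window_comp (g : A → B) (u : ℕ → A) (i n : ℕ) :
    window (g ∘ u) i n = (window u i n).map g := by
  simp [window]

lemma isFactor_comp_iff (g : A → B) (u : ℕ → A) (w : List B) :
    IsFactor (g ∘ u) w ↔ ∃ v, IsFactor u v ∧ w = v.map g := by
  constructor
  · rintro ⟨i, hi⟩
    exact ⟨window u i w.length, ⟨i, by rw [window_length]⟩, hi.trans (window_comp g u i _)⟩
  · rintro ⟨v, ⟨i, hi⟩, rfl⟩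
    exact ⟨i, by rw [List.length_map, window_comp, ← hi]⟩

end Window

theorem BalancedWord.comp_iff {A B : Type*} [DecidableEq A] [DecidableEq B] {g : A → B}
    (hg : Function.Injective g) (u : ℕ → A) : BalancedWord (g ∘ u) ↔ BalancedWord u := by
  have hcount (a : A) (v : List A) : (v.map g).count (g a) = v.count a :=
    List.count_map_of_injective _ g hg a
  constructor
  · intro hbal x v w hv hw hlen
    simpa only [hcount] using hbal (g x) (v.map g) (w.map g)
      ((isFactor_comp_iff g u _).2 ⟨v, hv, rfl⟩) ((isFactor_comp_iff g u _).2 ⟨w, hw, rfl⟩)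
      (by simp [hlen])
  · intro hbal y _ _ hgv hgw hlen
    obtain ⟨v, hv, rfl⟩ := (isFactor_comp_iff g u _).1 hgv
    obtain ⟨w, hw, rfl⟩ := (isFactor_comp_iff g u _).1 hgw
    rw [List.length_map, List.length_map] at hlen
    by_cases hy : y ∈ Set.range g
    · obtain ⟨a, rfl⟩ := hy
      simpa only [hcount] using hbal a v w hv hw hlen
    · have hzero (l : List A) : (l.map g).count y = 0 :=
        List.count_eq_zero.2 fun hmem => hy <| by
          obtain ⟨a, -, ha⟩ := List.mem_map.1 hmem
          exact ⟨a, ha⟩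
      simp [hzero]

theorem caFInf_eq_comp {A B : Type*} (f : List A → B) (r : ℕ) (hr : 1 ≤ r)
    (hf : ∀ (x : A) (y₁ y₂ : List A), y₁.length = r - 1 → y₂.length = r - 1 →
      f (x :: y₁) = f (x :: y₂))
    (u : ℕ → A) :
    caFInf f r u = (fun a => f (a :: List.replicate (r - 1) a)) ∘ u := by
  obtain ⟨m, rfl⟩ : ∃ m, r = m + 1 := ⟨r - 1, by omega⟩
  funext i
  simp only [caFInf, Function.comp_apply, window_succ]
  exact hf _ _ _ (window_length _ _ _) List.length_replicate

theorem ca_balanced_general {A B : Type*} [DecidableEq A] [DecidableEq B]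
    (f : List A → B) (r : ℕ) (hr : 1 ≤ r)
    (hf : ∀ (x₁ x₂ : A) (y₁ y₂ : List A), y₁.length = r - 1 → y₂.length = r - 1 →
      (f (x₁ :: y₁) = f (x₂ :: y₂) ↔ x₁ = x₂))
    (u : ℕ → A) :
    BalancedWord (caFInf f r u) ↔ BalancedWord u := by
  have hinj : Function.Injective fun a => f (a :: List.replicate (r - 1) a) := fun a b h =>
    (hf a b _ _ List.length_replicate List.length_replicate).1 h
  rw [caFInf_eq_comp f r hr (fun x _ _ h₁ h₂ => (hf x x _ _ h₁ h₂).2 rfl) u]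
  exact BalancedWord.comp_iff hinj u

theorem ca_balanced {A B : Type*} [DecidableEq A] [DecidableEq B]
    (f : List A → B) (r : ℕ) (hr : 1 ≤ r)
    (hf : ∀ (x₁ x₂ : A) (y₁ y₂ : List A), y₁.length = r - 1 → y₂.length = r - 1 →
      (f (x₁ :: y₁) = f (x₂ :: y₂) ↔ x₁ = x₂))
    (u : ℕ → A) (hrec : Recurrent u) :
    BalancedWord (caFInf f r u) ↔ BalancedWord u :=
  ca_balanced_general f r hr hf u
end

section
/- Let u be an infinite word whose factor set is closed under reversal and F an injective stable cellular automaton of radius r (each factor of F(u) comes from a unique factor of u, and the local rule is reversal-invariant). Then a factor u₁ of u of length ≥ r is a palindrome if and only if F(u₁) is a palindrome. -/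
/-- The factor set of `u` is closed under reversal. -/
def ClosedUnderReversal {A : Type*} (u : ℕ → A) : Prop :=
  ∀ w : List A, IsFactor u w → IsFactor u w.reverse

lemma caF_reverse {A B : Type*} (f : List A → B) (r : ℕ)
    (hst : ∀ w : List A, w.length = r → f w.reverse = f w)
    (w : List A) (hw : r ≤ w.length) :
    caF f r w.reverse = (caF f r w).reverse := by
  have hlen1 : (caF f r w.reverse).length = w.length + 1 - r := by
    simp [caF]
  have hlen2 : ((caF f r w).reverse).length = w.length + 1 - r := by
    simp [caF]
  apply List.ext_getElem (by omega)
  intro i hi1 hi2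
  have hi : i < w.length + 1 - r := by omega
  simp only [caF, List.length_reverse, List.getElem_reverse, List.getElem_map,
    List.getElem_range, List.length_map, List.length_range]
  have key : (w.reverse.drop i).take r
      = ((w.drop (w.length + 1 - r - 1 - i)).take r).reverse := by
    have h1 : w.reverse.drop i = (w.take (w.length - i)).reverse := by
      rw [List.reverse_take]
      congr 1
      omega
    have e1 : w.length - i - (w.length - i - r) = r := by omega
    have e2 : w.length - i - r = w.length + 1 - r - 1 - i := by omega
    rw [h1, List.take_reverse, List.length_take, Nat.min_eq_left (by omega),
      List.drop_take, e1, e2]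
  rw [key, hst]
  rw [List.length_take, List.length_drop]
  omega

theorem ca_palindrome_iff {A B : Type*} (f : List A → B) (r : ℕ) (hr : 1 ≤ r)
    (hst : ∀ w : List A, w.length = r → f w.reverse = f w)
    (u : ℕ → A) (hcl : ClosedUnderReversal u)
    (hinj : ∀ w₁ w₂ : List A, IsFactor u w₁ → IsFactor u w₂ →
      w₁.length = w₂.length → caF f r w₁ = caF f r w₂ → w₁ = w₂)
    (u₁ : List A) (h₁ : IsFactor u u₁) (hlen : r ≤ u₁.length) :
    u₁.reverse = u₁ ↔ (caF f r u₁).reverse = caF f r u₁ := by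
  constructor
  · intro h
    have hrev := caF_reverse f r hst u₁ hlen
    rw [h] at hrev
    exact hrev.symm
  · intro h
    apply hinj _ _ (hcl u₁ h₁) h₁ (by simp)
    rw [caF_reverse f r hst u₁ hlen, h]
end
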